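/- arXiv:1904.05147 — 2 statements merged into one kernel-verified Lean document; each statement's English description precedes it below -/
import Mathlib

section
/- Uniqueness for the DPP: if u and v are bounded Borel functions on Ω_ε that both satisfy the DPP at every point of Ω and u = v on Γ_ε, then u = v on all of Ω_ε. -/
/-!
Comparison principle, by contradiction. Put `w = u - v` and `M = sup w > 0` over `Ω_ε`. The
`sup`/`inf` terms of the DPP for `u` exceed those for `v` by at most `M`, so `η = M - w ≥ 0`
satisfies `η x ≥ β ⨍_{B_ε(x)} η` on `Ω`, while `η ≥ M` on `Γ_ε`. Comparing the average over
`B_ε(x)` with the one over the smaller ball `B_{ε/4}(x + ε e / 2)`, a point where `η < δ` yields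
a point `ε / 4` further in the direction `e` where `η < R δ`, with `R` depending only on `β` and
the volume ratio. Starting from a point where `η < M / R ^ N`, with `N ε / 4 > diam Ω`, these
points stay in `Ω` (as `η < M` there) yet leave it. So `η` is bounded below by a positive
constant, contradicting the definition of `M`.
-/

open MeasureTheory Metric Set
open scoped ENNReal

-- `Γ_ε`; the DPP on `Ω` is `u = dppOperator α β ε volume u` with `α`, `β` as in the paper.
def outerStrip {E : Type*} [PseudoMetricSpace E] (Ω : Set E) (ε : ℝ) : Set E :=
  {x | x ∉ Ω ∧ infDist x (frontier Ω) ≤ ε}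

noncomputable def dppOperator {E : Type*} [PseudoMetricSpace E] [MeasurableSpace E] (α β ε : ℝ)
    (μ : Measure E) (u : E → ℝ) (x : E) : ℝ :=
  α / (2 * ε) * (∫ t in (0 : ℝ)..ε, (sSup (u '' ball x t) + sInf (u '' ball x t)))
    + β * ⨍ z in ball x ε, u z ∂μ

theorem ball_subset_union_outerStrip {E : Type*} [NormedAddCommGroup E] [NormedSpace ℝ E]
    [FiniteDimensional ℝ E] {Ω : Set E} {x : E} (hx : x ∈ Ω) (ε : ℝ) :
    ball x ε ⊆ Ω ∪ outerStrip Ω ε := by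
  intro z hz
  by_cases hzΩ : z ∈ Ω
  · exact Or.inl hzΩ
  refine Or.inr ⟨hzΩ, ?_⟩
  have hΩc : Ωᶜ ≠ univ := fun h => (h ▸ mem_univ x : x ∈ Ωᶜ) hx
  obtain ⟨y, hy, hzy⟩ := exists_mem_frontier_infDist_compl_eq_dist (mem_compl hzΩ) hΩc
  rw [frontier_compl, compl_compl] at *
  calc infDist z (frontier Ω) ≤ dist z y := infDist_le_dist_of_mem hy
    _ = infDist z Ω := hzy.symm
    _ ≤ dist z x := infDist_le_dist_of_mem hx
    _ ≤ ε := (mem_ball.1 hz).le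

section Radial

variable {X : Type*} {u v : X → ℝ} {s : Set X} {C M : ℝ}

theorem abs_sSup_image_le (hs : s.Nonempty) (hC : ∀ z ∈ s, |u z| ≤ C) :
    |sSup (u '' s)| ≤ C := by
  obtain ⟨z, hz⟩ := hs
  have hbdd : BddAbove (u '' s) := ⟨C, forall_mem_image.2 fun y hy => (abs_le.1 (hC y hy)).2⟩
  refine abs_le.2 ⟨?_, csSup_le ⟨u z, mem_image_of_mem u hz⟩ (forall_mem_image.2 fun y hy =>
    (abs_le.1 (hC y hy)).2)⟩
  exact (abs_le.1 (hC z hz)).1.trans (le_csSup hbdd (mem_image_of_mem u hz))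

theorem abs_sInf_image_le (hs : s.Nonempty) (hC : ∀ z ∈ s, |u z| ≤ C) :
    |sInf (u '' s)| ≤ C := by
  obtain ⟨z, hz⟩ := hs
  have hbdd : BddBelow (u '' s) := ⟨-C, forall_mem_image.2 fun y hy => (abs_le.1 (hC y hy)).1⟩
  refine abs_le.2 ⟨le_csInf ⟨u z, mem_image_of_mem u hz⟩ (forall_mem_image.2 fun y hy =>
    (abs_le.1 (hC y hy)).1), ?_⟩
  exact (csInf_le hbdd (mem_image_of_mem u hz)).trans (abs_le.1 (hC z hz)).2

theorem sSup_image_le_sSup_image_add (hs : s.Nonempty) (hv : BddAbove (v '' s))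
    (h : ∀ z ∈ s, u z ≤ v z + M) : sSup (u '' s) ≤ sSup (v '' s) + M :=
  csSup_le (hs.image u) (forall_mem_image.2 fun z hz =>
    (h z hz).trans (add_le_add_left (le_csSup hv (mem_image_of_mem v hz)) M))

theorem sInf_image_le_sInf_image_add (hs : s.Nonempty) (hu : BddBelow (u '' s))
    (h : ∀ z ∈ s, u z ≤ v z + M) : sInf (u '' s) ≤ sInf (v '' s) + M :=
  sub_le_iff_le_add.1 <| le_csInf (hs.image v) (forall_mem_image.2 fun z hz =>
    sub_le_iff_le_add.2 ((csInf_le hu (mem_image_of_mem u hz)).trans (h z hz)))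

end Radial

theorem intervalIntegrable_of_monotoneOn_Ioc {f : ℝ → ℝ} {a b C : ℝ} (hab : a ≤ b)
    (hf : MonotoneOn f (Ioc a b)) (hC : ∀ t ∈ Ioc a b, |f t| ≤ C) :
    IntervalIntegrable f volume a b := by
  rw [intervalIntegrable_iff_integrableOn_Ioc_of_le hab]
  refine ⟨(aemeasurable_restrict_of_monotoneOn measurableSet_Ioc hf).aestronglyMeasurable,
    .restrict_of_bounded (C := C) measure_Ioc_lt_top ?_⟩
  exact (ae_restrict_iff' measurableSet_Ioc).2 (ae_of_all _ hC)

theorem intervalIntegrable_of_antitoneOn_Ioc {f : ℝ → ℝ} {a b C : ℝ} (hab : a ≤ b)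
    (hf : AntitoneOn f (Ioc a b)) (hC : ∀ t ∈ Ioc a b, |f t| ≤ C) :
    IntervalIntegrable f volume a b := by
  have := (intervalIntegrable_of_monotoneOn_Ioc (f := -f) hab hf.neg
    (fun t ht => (abs_neg (f t)).le.trans (hC t ht))).neg
  rwa [neg_neg] at this

section Ball

variable {E : Type*} [PseudoMetricSpace E] {u v : E → ℝ} {x : E} {ε C C' M : ℝ}

theorem intervalIntegrable_sSup_add_sInf_image_ball (hε : 0 ≤ ε)
    (hC : ∀ z ∈ ball x ε, |u z| ≤ C) :
    IntervalIntegrable (fun t => sSup (u '' ball x t) + sInf (u '' ball x t)) volume 0 ε := by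
  have hCt : ∀ t ∈ Ioc 0 ε, ∀ z ∈ ball x t, |u z| ≤ C := fun t ht z hz =>
    hC z (ball_subset_ball ht.2 hz)
  have hne : ∀ t ∈ Ioc (0 : ℝ) ε, (ball x t).Nonempty := fun t ht => nonempty_ball.2 ht.1
  refine IntervalIntegrable.add ?_ ?_
  · refine intervalIntegrable_of_monotoneOn_Ioc hε (fun s hs t ht hst => ?_)
      (fun t ht => abs_sSup_image_le (hne t ht) (hCt t ht))
    exact csSup_le_csSup ⟨C, forall_mem_image.2 fun z hz => (abs_le.1 (hCt t ht z hz)).2⟩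
      ((hne s hs).image u) (image_mono (ball_subset_ball hst))
  · refine intervalIntegrable_of_antitoneOn_Ioc hε (fun s hs t ht hst => ?_)
      (fun t ht => abs_sInf_image_le (hne t ht) (hCt t ht))
    exact csInf_le_csInf ⟨-C, forall_mem_image.2 fun z hz => (abs_le.1 (hCt t ht z hz)).1⟩
      ((hne s hs).image u) (image_mono (ball_subset_ball hst))

theorem integral_sSup_add_sInf_image_ball_le (hε : 0 ≤ ε)
    (hu : ∀ z ∈ ball x ε, |u z| ≤ C) (hv : ∀ z ∈ ball x ε, |v z| ≤ C')
    (h : ∀ z ∈ ball x ε, u z ≤ v z + M) :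
    ∫ t in (0 : ℝ)..ε, (sSup (u '' ball x t) + sInf (u '' ball x t)) ≤
      (∫ t in (0 : ℝ)..ε, (sSup (v '' ball x t) + sInf (v '' ball x t))) + 2 * M * ε := by
  have hIv := intervalIntegrable_sSup_add_sInf_image_ball hε hv
  have hpt : ∀ t ∈ Ioo 0 ε, sSup (u '' ball x t) + sInf (u '' ball x t) ≤
      sSup (v '' ball x t) + sInf (v '' ball x t) + 2 * M := by
    intro t ht
    have hne : (ball x t).Nonempty := nonempty_ball.2 ht.1
    have hsub : ball x t ⊆ ball x ε := ball_subset_ball ht.2.le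
    have hsup := sSup_image_le_sSup_image_add hne
      ⟨C', forall_mem_image.2 fun z hz => (abs_le.1 (hv z (hsub hz))).2⟩ fun z hz => h z (hsub hz)
    have hinf := sInf_image_le_sInf_image_add hne
      ⟨-C, forall_mem_image.2 fun z hz => (abs_le.1 (hu z (hsub hz))).1⟩ fun z hz => h z (hsub hz)
    linarith
  calc _ ≤ ∫ t in (0 : ℝ)..ε, (sSup (v '' ball x t) + sInf (v '' ball x t) + 2 * M) :=
        intervalIntegral.integral_mono_on_of_le_Ioo hε
          (intervalIntegrable_sSup_add_sInf_image_ball hε hu) (hIv.add intervalIntegrable_const) hpt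
    _ = _ := by
      rw [intervalIntegral.integral_add hIv intervalIntegrable_const,
        intervalIntegral.integral_const, smul_eq_mul]
      ring

end Ball

section Average

variable {X : Type*} [MeasurableSpace X] {μ : Measure X} {f g : X → ℝ} {s t : Set X}

theorem setAverage_sub (hf : IntegrableOn f s μ) (hg : IntegrableOn g s μ) :
    ⨍ z in s, (f z - g z) ∂μ = ⨍ z in s, f z ∂μ - ⨍ z in s, g z ∂μ := by
  simp only [setAverage_eq, integral_sub hf hg, smul_sub]

theorem exists_le_measureReal_div_mul_setAverage (hts : t ⊆ s) (hs : MeasurableSet s)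
    (ht₀ : μ t ≠ 0) (hs₁ : μ s ≠ ∞) (hf₀ : ∀ z ∈ s, 0 ≤ f z) (hf : IntegrableOn f s μ) :
    ∃ z ∈ t, f z ≤ μ.real s / μ.real t * ⨍ z in s, f z ∂μ := by
  have ht₁ : μ t ≠ ∞ := ne_top_of_le_ne_top hs₁ (measure_mono hts)
  obtain ⟨z, hz, hle⟩ := exists_le_setAverage ht₀ ht₁ (hf.mono_set hts)
  have ht : 0 < μ.real t := ENNReal.toReal_pos ht₀ ht₁
  have hs₀ : 0 < μ.real s := ht.trans_le (measureReal_mono hts hs₁)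
  refine ⟨z, hz, hle.trans ?_⟩
  rw [setAverage_eq, setAverage_eq, smul_eq_mul, smul_eq_mul]
  calc (μ.real t)⁻¹ * ∫ z in t, f z ∂μ ≤ (μ.real t)⁻¹ * ∫ z in s, f z ∂μ :=
        mul_le_mul_of_nonneg_left
          (setIntegral_mono_set hf (ae_restrict_of_forall_mem hs hf₀) hts.eventuallyLE)
          (inv_nonneg.2 ht.le)
    _ = μ.real s / μ.real t * ((μ.real s)⁻¹ * ∫ z in s, f z ∂μ) := by
      field_simp

theorem Measurable.integrableOn_of_abs_le {C : ℝ} (hf : Measurable f) (hs : MeasurableSet s)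
    (hμs : μ s ≠ ∞) (hC : ∀ z ∈ s, |f z| ≤ C) : IntegrableOn f s μ :=
  Measure.integrableOn_of_bounded hμs hf.aestronglyMeasurable (ae_restrict_of_forall_mem hs hC)

end Average

theorem dppOperator_sub_dppOperator_le {E : Type*} [PseudoMetricSpace E] [ProperSpace E]
    [MeasurableSpace E] [OpensMeasurableSpace E] {μ : Measure E} [IsFiniteMeasureOnCompacts μ]
    {α β ε C C' M : ℝ} {u v : E → ℝ} {x : E} (hα : 0 ≤ α) (hε : 0 < ε)
    (hu : Measurable u) (hv : Measurable v)
    (hCu : ∀ z ∈ ball x ε, |u z| ≤ C) (hCv : ∀ z ∈ ball x ε, |v z| ≤ C')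
    (h : ∀ z ∈ ball x ε, u z ≤ v z + M) :
    dppOperator α β ε μ u x - dppOperator α β ε μ v x ≤
      α * M + β * ⨍ z in ball x ε, (u z - v z) ∂μ := by
  have hint := mul_le_mul_of_nonneg_left (integral_sSup_add_sInf_image_ball_le hε.le hCu hCv h)
    (by positivity : 0 ≤ α / (2 * ε))
  have hαM : α / (2 * ε) * (2 * M * ε) = α * M := by field_simp
  rw [setAverage_sub (hu.integrableOn_of_abs_le measurableSet_ball measure_ball_lt_top.ne hCu)
    (hv.integrableOn_of_abs_le measurableSet_ball measure_ball_lt_top.ne hCv), dppOperator,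
    dppOperator]
  rw [mul_add, hαM] at hint
  linarith

theorem mul_setAverage_le_of_dppOperator_eq {E : Type*} [PseudoMetricSpace E] [ProperSpace E]
    [MeasurableSpace E] [OpensMeasurableSpace E] {μ : Measure E} [IsFiniteMeasureOnCompacts μ]
    [μ.IsOpenPosMeasure] {α β ε C C' M : ℝ} {u v : E → ℝ} {x : E} (hα : 0 ≤ α)
    (hαβ : α + β = 1) (hε : 0 < ε) (hu : Measurable u) (hv : Measurable v)
    (hCu : ∀ z ∈ ball x ε, |u z| ≤ C) (hCv : ∀ z ∈ ball x ε, |v z| ≤ C')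
    (hM : ∀ z ∈ ball x ε, u z - v z ≤ M)
    (hux : u x = dppOperator α β ε μ u x) (hvx : v x = dppOperator α β ε μ v x) :
    β * ⨍ z in ball x ε, (M - (u z - v z)) ∂μ ≤ M - (u x - v x) := by
  have key := dppOperator_sub_dppOperator_le (μ := μ) (β := β) (M := M) hα hε hu hv hCu hCv
    (fun z hz => by linarith [hM z hz])
  rw [← hux, ← hvx] at key
  rw [setAverage_sub (g := fun z => u z - v z) (integrableOn_const measure_ball_lt_top.ne)
    ((hu.integrableOn_of_abs_le measurableSet_ball measure_ball_lt_top.ne hCu).sub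
      (hv.integrableOn_of_abs_le measurableSet_ball measure_ball_lt_top.ne hCv)),
    setAverage_const (measure_ball_pos μ x hε).ne' measure_ball_lt_top.ne]
  obtain rfl : α = 1 - β := by linarith
  linarith

section InnerProductSpace

open RealInnerProductSpace

variable {E : Type*} [NormedAddCommGroup E] [InnerProductSpace ℝ E] {x e : E} {ε : ℝ}

theorem ball_add_smul_subset_ball (he : ‖e‖ = 1) (hε : 0 ≤ ε) :
    ball (x + (ε / 2) • e) (ε / 4) ⊆ ball x ε := by
  refine ball_subset_ball' ?_
  rw [dist_self_add_left, norm_smul, he, Real.norm_of_nonneg (by positivity)]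
  linarith

theorem inner_add_le_of_mem_ball_add_smul (he : ‖e‖ = 1) {z : E}
    (hz : z ∈ ball (x + (ε / 2) • e) (ε / 4)) : ⟪x, e⟫ + ε / 4 ≤ ⟪z, e⟫ := by
  have hze : |⟪z - (x + (ε / 2) • e), e⟫| < ε / 4 := by
    calc _ ≤ ‖z - (x + (ε / 2) • e)‖ * ‖e‖ := abs_real_inner_le_norm _ _
      _ < ε / 4 := by rw [he, mul_one, ← dist_eq_norm]; exact mem_ball.1 hz
  rw [inner_sub_left, inner_add_left, inner_smul_left, real_inner_self_eq_norm_sq, he] at hze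
  simp only [conj_trivial, one_pow, mul_one] at hze
  linarith [(abs_lt.1 hze).1]

variable [MeasurableSpace E] [BorelSpace E] [FiniteDimensional ℝ E]
  {μ : Measure E} [μ.IsAddHaarMeasure] {β : ℝ} {η : E → ℝ}

theorem exists_mem_ball_le_mul_of_le_setAverage (he : ‖e‖ = 1) (hε : 0 < ε) (hβ : 0 < β)
    (hη₀ : ∀ z ∈ ball x ε, 0 ≤ η z) (hη : IntegrableOn η (ball x ε) μ)
    (hsup : β * ⨍ z in ball x ε, η z ∂μ ≤ η x) :
    ∃ z ∈ ball x ε, η z ≤ μ.real (ball 0 ε) / (β * μ.real (ball 0 (ε / 4))) * η x ∧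
      ⟪x, e⟫ + ε / 4 ≤ ⟪z, e⟫ := by
  obtain ⟨z, hz, hηz⟩ := exists_le_measureReal_div_mul_setAverage
    (ball_add_smul_subset_ball he hε.le) measurableSet_ball
    (measure_ball_pos μ _ (by positivity)).ne' measure_ball_lt_top.ne hη₀ hη
  refine ⟨z, ball_add_smul_subset_ball he hε.le hz, hηz.trans ?_,
    inner_add_le_of_mem_ball_add_smul he hz⟩
  have hc : 0 < μ.real (ball (0 : E) (ε / 4)) :=
    ENNReal.toReal_pos (measure_ball_pos μ _ (by positivity)).ne' measure_ball_lt_top.ne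
  rw [Measure.addHaar_real_ball_center μ x, Measure.addHaar_real_ball_center μ (x + _)]
  calc _ = μ.real (ball 0 ε) / (β * μ.real (ball 0 (ε / 4))) * (β * ⨍ z in ball x ε, η z ∂μ) := by
        field_simp
    _ ≤ _ := mul_le_mul_of_nonneg_left hsup (by positivity)

end InnerProductSpace

section Chain

open RealInnerProductSpace

variable {E : Type*} [NormedAddCommGroup E] [InnerProductSpace ℝ E] [Nontrivial E]
  [MeasurableSpace E] [BorelSpace E] [FiniteDimensional ℝ E]
  {μ : Measure E} [μ.IsAddHaarMeasure] {β ε m : ℝ} {η : E → ℝ} {Ω D : Set E}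

theorem exists_pos_le_of_le_setAverage (hΩ : Bornology.IsBounded Ω) (hε : 0 < ε) (hβ : 0 < β)
    (hm : 0 < m) (hD : ∀ x ∈ Ω, ball x ε ⊆ D) (hη₀ : ∀ z ∈ D, 0 ≤ η z)
    (hηm : ∀ z ∈ D \ Ω, m ≤ η z) (hη : ∀ x ∈ Ω, IntegrableOn η (ball x ε) μ)
    (hsup : ∀ x ∈ Ω, β * ⨍ z in ball x ε, η z ∂μ ≤ η x) :
    ∃ δ > 0, ∀ x ∈ D, δ ≤ η x := by
  obtain ⟨e, he⟩ := exists_norm_eq E zero_le_one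
  set R := max 1 (μ.real (ball 0 ε) / (β * μ.real (ball 0 (ε / 4))))
  have hR : 1 ≤ R := le_max_left _ _
  have hmem : ∀ x ∈ D, η x < m → x ∈ Ω := fun x hx hlt =>
    by_contra fun h => (hηm x ⟨hx, h⟩).not_gt hlt
  have hmem' : ∀ k : ℕ, ∀ x ∈ D, η x < m / R ^ k → x ∈ Ω := fun k x hx hlt =>
    hmem x hx (hlt.trans_le (div_le_self hm.le (one_le_pow₀ hR)))
  have step : ∀ x ∈ Ω, ∃ z ∈ D, η z ≤ R * η x ∧ ⟪x, e⟫ + ε / 4 ≤ ⟪z, e⟫ := by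
    intro x hx
    obtain ⟨z, hz, hηz, hze⟩ := exists_mem_ball_le_mul_of_le_setAverage he hε hβ
      (fun z hz => hη₀ z (hD x hx hz)) (hη x hx) (hsup x hx)
    refine ⟨z, hD x hx hz, hηz.trans ?_, hze⟩
    exact mul_le_mul_of_nonneg_right (le_max_right _ _) (hη₀ x (hD x hx (mem_ball_self hε)))
  have chain : ∀ k : ℕ, ∀ x ∈ D, η x < m / R ^ k → ∃ y ∈ Ω, ⟪x, e⟫ + k * (ε / 4) ≤ ⟪y, e⟫ := by
    intro k
    induction k with
    | zero => exact fun x hx hlt => ⟨x, hmem' 0 x hx hlt, by simp⟩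
    | succ k ih =>
      intro x hx hlt
      obtain ⟨z, hzD, hηz, hze⟩ := step x (hmem' _ x hx hlt)
      have hηz' : η z < m / R ^ k := calc
        η z ≤ R * η x := hηz
        _ < R * (m / R ^ (k + 1)) := mul_lt_mul_of_pos_left hlt (by positivity)
        _ = m / R ^ k := by field_simp; ring
      obtain ⟨y, hyΩ, hy⟩ := ih z hzD hηz'
      exact ⟨y, hyΩ, by push_cast; linarith⟩
  obtain ⟨N, hN⟩ := exists_nat_gt (diam Ω / (ε / 4))
  refine ⟨m / R ^ N, by positivity, fun x hx => not_lt.1 fun hlt => ?_⟩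
  obtain ⟨y, hyΩ, hy⟩ := chain N x hx hlt
  have hdiam : ⟪y, e⟫ - ⟪x, e⟫ ≤ diam Ω := calc
    _ = ⟪y - x, e⟫ := (inner_sub_left _ _ _).symm
    _ ≤ ‖y - x‖ * ‖e‖ := real_inner_le_norm _ _
    _ ≤ diam Ω := by
      rw [he, mul_one, ← dist_eq_norm]
      exact dist_le_diam_of_mem hΩ hyΩ (hmem' N x hx hlt)
  rw [div_lt_iff₀ (by positivity)] at hN
  linarith

end Chain

theorem le_of_dppOperator_eq {E : Type*} [NormedAddCommGroup E] [InnerProductSpace ℝ E]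
    [Nontrivial E] [MeasurableSpace E] [BorelSpace E] [FiniteDimensional ℝ E]
    {μ : Measure E} [μ.IsAddHaarMeasure] {α β ε : ℝ} {Ω : Set E} {u v : E → ℝ}
    (hΩ : Bornology.IsBounded Ω) (hα : 0 ≤ α) (hβ : 0 < β) (hαβ : α + β = 1) (hε : 0 < ε)
    (hu : Measurable u) (hv : Measurable v)
    (hCu : ∃ C, ∀ x ∈ Ω ∪ outerStrip Ω ε, |u x| ≤ C)
    (hCv : ∃ C, ∀ x ∈ Ω ∪ outerStrip Ω ε, |v x| ≤ C)
    (hudpp : ∀ x ∈ Ω, u x = dppOperator α β ε μ u x)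
    (hvdpp : ∀ x ∈ Ω, v x = dppOperator α β ε μ v x)
    (hle : ∀ x ∈ outerStrip Ω ε, u x ≤ v x) :
    ∀ x ∈ Ω ∪ outerStrip Ω ε, u x ≤ v x := by
  set D := Ω ∪ outerStrip Ω ε
  obtain ⟨Cu, hCu⟩ := hCu
  obtain ⟨Cv, hCv⟩ := hCv
  by_contra! ⟨x₀, hx₀, hlt⟩
  have hbdd : BddAbove ((fun z => u z - v z) '' D) :=
    ⟨Cu + Cv, forall_mem_image.2 fun z hz => by
      linarith [(abs_le.1 (hCu z hz)).2, (abs_le.1 (hCv z hz)).1]⟩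
  set M := sSup ((fun z => u z - v z) '' D)
  have hM : ∀ z ∈ D, u z - v z ≤ M := fun z hz => le_csSup hbdd (mem_image_of_mem _ hz)
  have hM₀ : 0 < M := (sub_pos.2 hlt).trans_le (hM x₀ hx₀)
  have hball : ∀ x ∈ Ω, ball x ε ⊆ D := fun x hx => ball_subset_union_outerStrip hx ε
  have hCu' : ∀ x ∈ Ω, ∀ z ∈ ball x ε, |u z| ≤ Cu := fun x hx z hz => hCu z (hball x hx hz)
  have hCv' : ∀ x ∈ Ω, ∀ z ∈ ball x ε, |v z| ≤ Cv := fun x hx z hz => hCv z (hball x hx hz)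
  have hI : ∀ x ∈ Ω, IntegrableOn (fun z => M - (u z - v z)) (ball x ε) μ := fun x hx =>
    (integrableOn_const measure_ball_lt_top.ne).sub
      ((hu.integrableOn_of_abs_le measurableSet_ball measure_ball_lt_top.ne (hCu' x hx)).sub
        (hv.integrableOn_of_abs_le measurableSet_ball measure_ball_lt_top.ne (hCv' x hx)))
  have hsup : ∀ x ∈ Ω, β * ⨍ z in ball x ε, (M - (u z - v z)) ∂μ ≤ M - (u x - v x) :=
    fun x hx => mul_setAverage_le_of_dppOperator_eq hα hαβ hε hu hv (hCu' x hx) (hCv' x hx)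
      (fun z hz => hM z (hball x hx hz)) (hudpp x hx) (hvdpp x hx)
  obtain ⟨δ, hδ, hδle⟩ := exists_pos_le_of_le_setAverage hΩ hε hβ hM₀ hball
    (fun z hz => sub_nonneg.2 (hM z hz))
    (fun z hz => by linarith [hle z (hz.1.resolve_left hz.2)]) hI hsup
  have hMδ : M ≤ M - δ := csSup_le ⟨_, mem_image_of_mem _ hx₀⟩
    (forall_mem_image.2 fun z hz => by linarith [hδle z hz])
  linarith

theorem dpp_uniqueness_general (n : ℕ) (hn : 2 ≤ n) (p : ℝ) (hp : 2 < p)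
    (Ω : Set (EuclideanSpace ℝ (Fin n)))
    (hΩbdd : Bornology.IsBounded Ω)
    (ε : ℝ) (hε : ε ∈ Set.Ioo (0 : ℝ) 1)
    (u v : EuclideanSpace ℝ (Fin n) → ℝ)
    (humeas : Measurable u) (hvmeas : Measurable v)
    (hubdd : ∃ M, ∀ x ∈ Ω ∪ {x | x ∉ Ω ∧ Metric.infDist x (frontier Ω) ≤ ε}, |u x| ≤ M)
    (hvbdd : ∃ M, ∀ x ∈ Ω ∪ {x | x ∉ Ω ∧ Metric.infDist x (frontier Ω) ≤ ε}, |v x| ≤ M)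
    (hudpp : ∀ x ∈ Ω, u x =
        ((p - 2) / (n + p)) / (2 * ε) *
            (∫ t in (0 : ℝ)..ε, (sSup (u '' Metric.ball x t) + sInf (u '' Metric.ball x t)))
          + ((n + 2) / (n + p)) * ⨍ z in Metric.ball x ε, u z)
    (hvdpp : ∀ x ∈ Ω, v x =
        ((p - 2) / (n + p)) / (2 * ε) *
            (∫ t in (0 : ℝ)..ε, (sSup (v '' Metric.ball x t) + sInf (v '' Metric.ball x t)))
          + ((n + 2) / (n + p)) * ⨍ z in Metric.ball x ε, v z)
    (hbdry : ∀ x ∈ {x | x ∉ Ω ∧ Metric.infDist x (frontier Ω) ≤ ε}, u x = v x) :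
    ∀ x ∈ Ω ∪ {x | x ∉ Ω ∧ Metric.infDist x (frontier Ω) ≤ ε}, u x = v x := by
  have : NeZero n := ⟨by omega⟩
  have hnp : (0 : ℝ) < n + p := by positivity
  have hα : 0 ≤ (p - 2) / (n + p) := div_nonneg (by linarith) hnp.le
  have hβ : 0 < ((n : ℝ) + 2) / (n + p) := by positivity
  have hαβ : (p - 2) / (n + p) + (n + 2) / (n + p) = 1 := by field_simp; ring
  intro x hx
  exact le_antisymm
    (le_of_dppOperator_eq hΩbdd hα hβ hαβ hε.1 humeas hvmeas hubdd hvbdd hudpp hvdpp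
      (fun z hz => (hbdry z hz).le) x hx)
    (le_of_dppOperator_eq hΩbdd hα hβ hαβ hε.1 hvmeas humeas hvbdd hubdd hvdpp hudpp
      (fun z hz => (hbdry z hz).ge) x hx)

/-- **Uniqueness for the DPP.** If `u` and `v` are bounded Borel functions on `Ω_ε` both
satisfying the DPP at every point of `Ω` and `u = v` on `Γ_ε`, then `u = v` on all of
`Ω_ε = Ω ∪ Γ_ε`. -/
theorem dpp_uniqueness (n : ℕ) (hn : 2 ≤ n) (p : ℝ) (hp : 2 < p)
    (Ω : Set (EuclideanSpace ℝ (Fin n)))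
    (hΩopen : IsOpen Ω) (hΩconn : IsConnected Ω) (hΩbdd : Bornology.IsBounded Ω)
    (ε : ℝ) (hε : ε ∈ Set.Ioo (0 : ℝ) 1)
    (u v : EuclideanSpace ℝ (Fin n) → ℝ)
    (humeas : Measurable u) (hvmeas : Measurable v)
    (hubdd : ∃ M, ∀ x ∈ Ω ∪ {x | x ∉ Ω ∧ Metric.infDist x (frontier Ω) ≤ ε}, |u x| ≤ M)
    (hvbdd : ∃ M, ∀ x ∈ Ω ∪ {x | x ∉ Ω ∧ Metric.infDist x (frontier Ω) ≤ ε}, |v x| ≤ M)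
    (hudpp : ∀ x ∈ Ω, u x =
        ((p - 2) / (n + p)) / (2 * ε) *
            (∫ t in (0 : ℝ)..ε, (sSup (u '' Metric.ball x t) + sInf (u '' Metric.ball x t)))
          + ((n + 2) / (n + p)) * ⨍ z in Metric.ball x ε, u z)
    (hvdpp : ∀ x ∈ Ω, v x =
        ((p - 2) / (n + p)) / (2 * ε) *
            (∫ t in (0 : ℝ)..ε, (sSup (v '' Metric.ball x t) + sInf (v '' Metric.ball x t)))
          + ((n + 2) / (n + p)) * ⨍ z in Metric.ball x ε, v z)
    (hbdry : ∀ x ∈ {x | x ∉ Ω ∧ Metric.infDist x (frontier Ω) ≤ ε}, u x = v x) :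
    ∀ x ∈ Ω ∪ {x | x ∉ Ω ∧ Metric.infDist x (frontier Ω) ≤ ε}, u x = v x :=
  dpp_uniqueness_general n hn p hp Ω hΩbdd ε hε u v humeas hvmeas hubdd hvbdd hudpp hvdpp hbdry
end

section
/- Maximum principle bound: if u is a bounded Borel function on Ω_ε satisfying the DPP at every point of Ω with u = F on Γ_ε, where F : Γ_ε → ℝ is bounded Borel, then |u(x)| ≤ sup_{Γ_ε} |F| for every x ∈ Ω_ε. -/
/-!
Let `S` be the supremum of `u` over `Ω_ε`. At `x ∈ Ω` the DPP, with every `sup` bounded by `S`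
and, for `t > ε/2`, every `inf` bounded by `u y` for a fixed `y ∈ B_{ε/2}(x)`, gives
`α (S - u y) ≤ 4 (S - u x)`. Walking from any point of `Ω` in a fixed direction with steps
shorter than `ε/2`, one leaves the bounded set `Ω` after at most `N` steps (`N` independent
of the starting point), landing in `Γ_ε`; hence `S - sup_Γ u ≤ (4/α)^N (S - u x)` for all
`x ∈ Ω`. Choosing `u x` close to `S` forces `S ≤ sup_Γ u`. The lower bound is the same
argument for `-u`, which satisfies the same DPP.
-/

open MeasureTheory Metric Set

section Frontier

variable {E : Type*} [NormedAddCommGroup E] [NormedSpace ℝ E]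

theorem exists_mem_segment_mem_frontier {s : Set E} {x y : E} (hx : x ∈ s) (hy : y ∉ s) :
    ∃ z ∈ segment ℝ x y, z ∈ frontier s := by
  by_contra! h
  have hsub : segment ℝ x y ⊆ interior s ∪ (closure s)ᶜ := fun z hz => by
    by_cases hzc : z ∈ closure s
    · exact .inl (not_not.1 fun hzi => h z hz ⟨hzc, hzi⟩)
    · exact .inr hzc
  have hxi : x ∈ interior s :=
    (hsub (left_mem_segment ℝ x y)).resolve_right (not_not.2 (subset_closure hx))
  have := (convex_segment x y).isPreconnected.subset_left_of_subset_union isOpen_interior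
    isClosed_closure.isOpen_compl (disjoint_compl_right.mono_left interior_subset_closure) hsub
    ⟨x, left_mem_segment ℝ x y, hxi⟩
  exact hy (interior_subset (this (right_mem_segment ℝ x y)))

theorem infDist_frontier_lt_of_mem_thickening {s : Set E} {δ : ℝ} {y : E}
    (hy : y ∈ thickening δ s) (hys : y ∉ s) : infDist y (frontier s) < δ := by
  obtain ⟨x, hx, hxy⟩ := mem_thickening_iff.1 hy
  obtain ⟨z, hz, hzs⟩ := exists_mem_segment_mem_frontier hx hys
  calc infDist y (frontier s) ≤ dist y z := infDist_le_dist_of_mem hzs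
    _ ≤ dist y x := by
      rw [dist_comm y x, dist_comm y z]
      exact segment_subset_closedBall_right x y hz
    _ < δ := hxy

end Frontier

section Chain

variable {E : Type*} [NormedAddCommGroup E] [NormedSpace ℝ E] [Nontrivial E]

theorem exists_mem_thickening_diff_le_pow_mul {Ω : Set E} (hΩ : Bornology.IsBounded Ω)
    {r C : ℝ} (hr : 0 < r) (hC : 1 ≤ C) {φ : E → ℝ} (hφ₀ : ∀ x ∈ Ω, 0 ≤ φ x)
    (hφ : ∀ x ∈ Ω, ∀ y ∈ ball x r, φ y ≤ C * φ x) :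
    ∃ N : ℕ, ∀ x ∈ Ω, ∃ y ∈ thickening r Ω \ Ω, φ y ≤ C ^ N * φ x := by
  obtain ⟨v, hv⟩ := exists_norm_eq E (half_pos hr).le
  have hstep : ∀ x, x + v ∈ ball x r := fun x => by
    rw [mem_ball, dist_self_add_left, hv]; linarith
  have walk : ∀ m : ℕ, ∀ x ∈ Ω, x + m • v ∉ Ω →
      ∃ y ∈ thickening r Ω \ Ω, φ y ≤ C ^ m * φ x := by
    intro m
    induction m with
    | zero => intro x hx hx'; simp_all
    | succ m ih =>
      intro x hx hxm
      by_cases hxv : x + v ∈ Ω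
      · obtain ⟨y, hy, hφy⟩ := ih (x + v) hxv (by rwa [add_assoc, ← succ_nsmul'])
        refine ⟨y, hy, hφy.trans ?_⟩
        calc C ^ m * φ (x + v) ≤ C ^ m * (C * φ x) := by
              gcongr
              exact hφ x hx _ (hstep x)
          _ = C ^ (m + 1) * φ x := by ring
      · refine ⟨x + v, ⟨mem_thickening_iff.2 ⟨x, hx, hstep x⟩, hxv⟩, ?_⟩
        calc φ (x + v) ≤ C * φ x := hφ x hx _ (hstep x)
          _ ≤ C ^ (m + 1) * φ x := by
              gcongr
              · exact hφ₀ x hx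
              · exact le_self_pow₀ hC m.succ_ne_zero
  obtain ⟨N, hN⟩ := exists_nat_gt (diam Ω / (r / 2))
  refine ⟨N, fun x hx => walk N x hx fun hxN => ?_⟩
  have := dist_le_diam_of_mem hΩ hx hxN
  rw [dist_self_add_right, RCLike.norm_nsmul ℝ, hv, nsmul_eq_mul] at this
  rw [div_lt_iff₀ (half_pos hr)] at hN
  linarith

end Chain

theorem Set.image_neg_fun_eq_neg_image {α : Type*} (u : α → ℝ) (s : Set α) :
    (-u) '' s = -(u '' s) := by
  rw [← image_neg_eq_neg, image_image]
  rfl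

section DPP

variable {X : Type*} [PseudoMetricSpace X]

theorem intervalIntegrable_sSup_image_ball {u : X → ℝ} {x : X} {ε : ℝ} (hε : 0 ≤ ε)
    (hu : BddAbove (u '' ball x ε)) :
    IntervalIntegrable (fun t => sSup (u '' ball x t)) volume 0 ε := by
  -- adjoining `x` changes nothing for `t > 0` and makes the function monotone on `[0, ε]`
  have hmono : MonotoneOn (fun t => sSup (u '' insert x (ball x t))) (uIcc 0 ε) := by
    intro s _ t ht hst
    simp only [image_insert_eq]
    refine csSup_le_csSup ?_ (insert_nonempty _ _)
      (insert_subset_insert (image_mono (ball_subset_ball hst)))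
    rw [uIcc_of_le hε] at ht
    exact (hu.mono (image_mono (ball_subset_ball ht.2))).insert _
  refine (intervalIntegrable_congr fun t ht => ?_).2 hmono.intervalIntegrable
  rw [uIoc_of_le hε] at ht
  simp only [insert_eq_of_mem (mem_ball_self ht.1)]

theorem intervalIntegrable_sInf_image_ball {u : X → ℝ} {x : X} {ε : ℝ} (hε : 0 ≤ ε)
    (hu : BddBelow (u '' ball x ε)) :
    IntervalIntegrable (fun t => sInf (u '' ball x t)) volume 0 ε := by
  have hneg : BddAbove ((-u) '' ball x ε) := by
    rwa [image_neg_fun_eq_neg_image, bddAbove_neg]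
  convert (intervalIntegrable_sSup_image_ball hε hneg).neg using 1
  ext t
  rw [Pi.neg_apply, image_neg_fun_eq_neg_image, Real.sSup_neg, neg_neg]

variable [MeasurableSpace X]

def SatisfiesDPP (μ : Measure X) (α β ε : ℝ) (Ω : Set X) (u : X → ℝ) : Prop :=
  ∀ x ∈ Ω, u x = α / (2 * ε) *
      (∫ t in (0 : ℝ)..ε, (sSup (u '' ball x t) + sInf (u '' ball x t)))
    + β * ⨍ z in ball x ε, u z ∂μ

theorem SatisfiesDPP.neg {μ : Measure X} {α β ε : ℝ} {Ω : Set X} {u : X → ℝ}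
    (hu : SatisfiesDPP μ α β ε Ω u) : SatisfiesDPP μ α β ε Ω (-u) := by
  intro x hx
  have hI : (fun t => sSup ((-u) '' ball x t) + sInf ((-u) '' ball x t))
      = fun t => -(sSup (u '' ball x t) + sInf (u '' ball x t)) := funext fun t => by
    rw [image_neg_fun_eq_neg_image, Real.sSup_neg, Real.sInf_neg]
    ring
  rw [hI, intervalIntegral.integral_neg, Pi.neg_apply, hu x hx]
  simp only [Pi.neg_apply, average_neg]
  ring

theorem SatisfiesDPP.mul_sub_le {μ : Measure X} [μ.IsOpenPosMeasure] {α β ε S : ℝ}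
    {Ω : Set X} {u : X → ℝ} {x y : X} (hu : SatisfiesDPP μ α β ε Ω u) (hα : 0 ≤ α)
    (hβ : 0 ≤ β) (hαβ : α + β = 1) (hε : 0 < ε) (hx : x ∈ Ω)
    (hfin : μ (ball x ε) ≠ ⊤) (hint : IntegrableOn u (ball x ε) μ)
    (hS : ∀ z ∈ ball x ε, u z ≤ S) (hbdd : BddBelow (u '' ball x ε))
    (hy : y ∈ ball x (ε / 2)) :
    α * (S - u y) ≤ 4 * (S - u x) := by
  have hbddA : BddAbove (u '' ball x ε) := ⟨S, forall_mem_image.2 hS⟩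
  have hsup : ∀ t ∈ Ioo 0 ε, sSup (u '' ball x t) ≤ S := fun t ht =>
    csSup_le ((nonempty_ball.2 ht.1).image u)
      (forall_mem_image.2 fun z hz => hS z (ball_subset_ball ht.2.le hz))
  have hinf : ∀ t ∈ Ioo 0 ε, ∀ z ∈ ball x t, sInf (u '' ball x t) ≤ u z :=
    fun t ht z hz => csInf_le (hbdd.mono (image_mono (ball_subset_ball ht.2.le)))
      (mem_image_of_mem u hz)
  have hI := (intervalIntegrable_sSup_image_ball hε.le hbddA).add
    (intervalIntegrable_sInf_image_ball hε.le hbdd)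
  have hIntegral : ∫ t in (0 : ℝ)..ε, (sSup (u '' ball x t) + sInf (u '' ball x t))
      ≤ ε / 2 * (2 * S) + ε / 2 * (S + u y) := by
    have hmid : ε / 2 ∈ uIcc 0 ε := by
      rw [uIcc_of_le hε.le]
      constructor <;> linarith
    have hI₁ := hI.mono_set (uIcc_subset_uIcc left_mem_uIcc hmid)
    have hI₂ := hI.mono_set (uIcc_subset_uIcc hmid right_mem_uIcc)
    rw [← intervalIntegral.integral_add_adjacent_intervals hI₁ hI₂]
    have h₁ := intervalIntegral.integral_mono_on_of_le_Ioo (by linarith) hI₁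
      (intervalIntegrable_const (c := 2 * S)) fun t ht => by
        have ht' : t ∈ Ioo 0 ε := ⟨ht.1, by linarith [ht.2]⟩
        linarith [hsup t ht', hinf t ht' x (mem_ball_self ht.1), hS x (mem_ball_self hε)]
    have h₂ := intervalIntegral.integral_mono_on_of_le_Ioo (by linarith) hI₂
      (intervalIntegrable_const (c := S + u y)) fun t ht => by
        have ht' : t ∈ Ioo 0 ε := ⟨by linarith [ht.1], ht.2⟩
        linarith [hsup t ht', hinf t ht' y (ball_subset_ball ht.1.le hy)]
    simp only [intervalIntegral.integral_const, smul_eq_mul] at h₁ h₂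
    linarith
  have hAvg : ⨍ z in ball x ε, u z ∂μ ≤ S := by
    obtain ⟨z, hz, hz'⟩ := exists_setAverage_le (measure_ball_pos μ x hε).ne' hfin hint
    exact hz'.trans (hS z hz)
  have hux : u x ≤ α / (2 * ε) * (ε / 2 * (2 * S) + ε / 2 * (S + u y)) + β * S := by
    rw [hu x hx]
    gcongr
  have hsimp :
      α / (2 * ε) * (ε / 2 * (2 * S) + ε / 2 * (S + u y)) = α * (3 * S + u y) / 4 := by
    field_simp
    ring
  linear_combination 4 * hux + 4 * hsimp + 4 * S * hαβ

end DPP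

theorem SatisfiesDPP.le_of_le_on_strip {E : Type*} [NormedAddCommGroup E] [NormedSpace ℝ E]
    [Nontrivial E] [ProperSpace E] [MeasurableSpace E] [OpensMeasurableSpace E] {μ : Measure E}
    [μ.IsOpenPosMeasure] [IsFiniteMeasureOnCompacts μ] {α β ε M : ℝ} {Ω Γ : Set E}
    {u : E → ℝ} (hu : SatisfiesDPP μ α β ε Ω u) (hα : 0 < α) (hβ : 0 ≤ β)
    (hαβ : α + β = 1) (hε : 0 < ε) (hΩ : Bornology.IsBounded Ω)
    (hΓ : thickening ε Ω \ Ω ⊆ Γ) (hmeas : AEStronglyMeasurable u μ)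
    (hbdd : Bornology.IsBounded (u '' (Ω ∪ Γ))) (hM : ∀ x ∈ Γ, u x ≤ M) :
    ∀ x ∈ Ω ∪ Γ, u x ≤ M := by
  intro x₀ hx₀
  have hball : ∀ x ∈ Ω, ball x ε ⊆ Ω ∪ Γ := fun x hx y hy => by
    by_cases hyΩ : y ∈ Ω
    · exact .inl hyΩ
    · exact .inr (hΓ ⟨mem_thickening_iff.2 ⟨x, hx, hy⟩, hyΩ⟩)
  set S := sSup (u '' (Ω ∪ Γ))
  have huS : ∀ y ∈ Ω ∪ Γ, u y ≤ S := fun y hy =>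
    le_csSup hbdd.bddAbove (mem_image_of_mem u hy)
  suffices S ≤ M from (huS x₀ hx₀).trans this
  by_contra! hMS
  obtain ⟨K, hK⟩ := isBounded_iff_forall_norm_le.1 hbdd
  set C := 4 / α
  have hC : 1 ≤ C := (one_le_div hα).2 (by linarith)
  have hstep : ∀ x ∈ Ω, ∀ y ∈ ball x (ε / 2), S - u y ≤ C * (S - u x) := by
    intro x hx y hy
    have hint : IntegrableOn u (ball x ε) μ :=
      Measure.integrableOn_of_bounded measure_ball_lt_top.ne hmeas
        ((ae_restrict_iff' measurableSet_ball).2 (ae_of_all _ fun z hz =>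
          hK _ (mem_image_of_mem u (hball x hx hz))))
    have := hu.mul_sub_le hα.le hβ hαβ hε hx measure_ball_lt_top.ne hint
      (fun z hz => huS z (hball x hx hz)) (hbdd.bddBelow.mono (image_mono (hball x hx))) hy
    rw [div_mul_eq_mul_div, le_div_iff₀ hα]
    linear_combination this
  obtain ⟨N, hN⟩ := exists_mem_thickening_diff_le_pow_mul hΩ (half_pos hε) hC
    (fun x hx => sub_nonneg.2 (huS x (.inl hx))) hstep
  have hCN : 1 ≤ C ^ N := one_le_pow₀ hC
  have hgap : ∀ x ∈ Ω ∪ Γ, (S - M) / C ^ N ≤ S - u x := by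
    intro x hx
    rw [div_le_iff₀' (by positivity)]
    rcases hx with hxΩ | hxΓ
    · obtain ⟨y, ⟨hyth, hyΩ⟩, hy⟩ := hN x hxΩ
      have hyΓ : y ∈ Γ := hΓ ⟨thickening_mono (by linarith) Ω hyth, hyΩ⟩
      linarith [hM y hyΓ]
    · have hSx : S - M ≤ S - u x := by linarith [hM x hxΓ]
      exact hSx.trans (le_mul_of_one_le_left (by linarith) hCN)
  have hSle : S ≤ S - (S - M) / C ^ N :=
    csSup_le (Set.Nonempty.image u ⟨x₀, hx₀⟩) (forall_mem_image.2 fun x hx => by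
      linarith [hgap x hx])
  have : 0 < (S - M) / C ^ N := div_pos (by linarith) (by positivity)
  linarith

theorem dpp_max_principle_general (n : ℕ) (hn : 2 ≤ n) (p : ℝ) (hp : 2 < p)
    (Ω : Set (EuclideanSpace ℝ (Fin n)))
    (hΩbdd : Bornology.IsBounded Ω)
    (ε : ℝ) (hε : ε ∈ Set.Ioo (0 : ℝ) 1)
    (F u : EuclideanSpace ℝ (Fin n) → ℝ)
    (hFbdd : ∃ M, ∀ x ∈ {x | x ∉ Ω ∧ Metric.infDist x (frontier Ω) ≤ ε}, |F x| ≤ M)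
    (humeas : Measurable u)
    (hubdd : ∃ M, ∀ x ∈ Ω ∪ {x | x ∉ Ω ∧ Metric.infDist x (frontier Ω) ≤ ε}, |u x| ≤ M)
    (hudpp : ∀ x ∈ Ω, u x =
        ((p - 2) / (n + p)) / (2 * ε) *
            (∫ t in (0 : ℝ)..ε, (sSup (u '' Metric.ball x t) + sInf (u '' Metric.ball x t)))
          + ((n + 2) / (n + p)) * ⨍ z in Metric.ball x ε, u z)
    (hbdry : ∀ x ∈ {x | x ∉ Ω ∧ Metric.infDist x (frontier Ω) ≤ ε}, u x = F x) :
    ∀ x ∈ Ω ∪ {x | x ∉ Ω ∧ Metric.infDist x (frontier Ω) ≤ ε},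
      |u x| ≤ sSup ((fun y => |F y|) '' {x | x ∉ Ω ∧ Metric.infDist x (frontier Ω) ≤ ε}) := by
  set Γ := {x | x ∉ Ω ∧ Metric.infDist x (frontier Ω) ≤ ε}
  have : NeZero n := ⟨by omega⟩
  have hdpp : SatisfiesDPP volume ((p - 2) / (n + p)) ((n + 2) / (n + p)) ε Ω u := hudpp
  have hα : 0 < (p - 2) / (n + p) := div_pos (by linarith) (by positivity)
  have hβ : 0 ≤ ((n : ℝ) + 2) / (n + p) := by positivity
  have hαβ : (p - 2) / (n + p) + (n + 2) / (n + p) = 1 := by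
    rw [← add_div, div_eq_one_iff_eq (by positivity)]
    ring
  have hΓ : thickening ε Ω \ Ω ⊆ Γ := fun y hy =>
    ⟨hy.2, (infDist_frontier_lt_of_mem_thickening hy.1 hy.2).le⟩
  obtain ⟨K, hK⟩ := hubdd
  have hbdd : Bornology.IsBounded (u '' (Ω ∪ Γ)) :=
    isBounded_iff_forall_norm_le.2 ⟨K, forall_mem_image.2 hK⟩
  have hbdd' : Bornology.IsBounded ((-u) '' (Ω ∪ Γ)) := by
    rw [image_neg_fun_eq_neg_image]
    exact hbdd.neg
  have hF : ∀ y ∈ Γ, |u y| ≤ sSup ((fun y => |F y|) '' Γ) := fun y hy => by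
    obtain ⟨M, hM⟩ := hFbdd
    rw [hbdry y hy]
    exact le_csSup ⟨M, forall_mem_image.2 hM⟩ (mem_image_of_mem _ hy)
  intro x hx
  refine abs_le.2 ⟨neg_le.1 ?_, ?_⟩
  · exact hdpp.neg.le_of_le_on_strip hα hβ hαβ hε.1 hΩbdd hΓ
      humeas.neg.aestronglyMeasurable hbdd' (fun y hy => (neg_le_abs _).trans (hF y hy)) x hx
  · exact hdpp.le_of_le_on_strip hα hβ hαβ hε.1 hΩbdd hΓ
      humeas.aestronglyMeasurable hbdd (fun y hy => (le_abs_self _).trans (hF y hy)) x hx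

/-- **Maximum principle bound.** If `u` is a bounded Borel function on `Ω_ε` satisfying the
DPP at every point of `Ω` with `u = F` on `Γ_ε`, where `F` is bounded Borel on `Γ_ε`, then
`|u(x)| ≤ sup_{Γ_ε} |F|` for every `x ∈ Ω_ε`. -/
theorem dpp_max_principle (n : ℕ) (hn : 2 ≤ n) (p : ℝ) (hp : 2 < p)
    (Ω : Set (EuclideanSpace ℝ (Fin n)))
    (hΩopen : IsOpen Ω) (hΩconn : IsConnected Ω) (hΩbdd : Bornology.IsBounded Ω)
    (ε : ℝ) (hε : ε ∈ Set.Ioo (0 : ℝ) 1)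
    (F u : EuclideanSpace ℝ (Fin n) → ℝ)
    (hFmeas : Measurable F)
    (hFbdd : ∃ M, ∀ x ∈ {x | x ∉ Ω ∧ Metric.infDist x (frontier Ω) ≤ ε}, |F x| ≤ M)
    (humeas : Measurable u)
    (hubdd : ∃ M, ∀ x ∈ Ω ∪ {x | x ∉ Ω ∧ Metric.infDist x (frontier Ω) ≤ ε}, |u x| ≤ M)
    (hudpp : ∀ x ∈ Ω, u x =
        ((p - 2) / (n + p)) / (2 * ε) *
            (∫ t in (0 : ℝ)..ε, (sSup (u '' Metric.ball x t) + sInf (u '' Metric.ball x t)))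
          + ((n + 2) / (n + p)) * ⨍ z in Metric.ball x ε, u z)
    (hbdry : ∀ x ∈ {x | x ∉ Ω ∧ Metric.infDist x (frontier Ω) ≤ ε}, u x = F x) :
    ∀ x ∈ Ω ∪ {x | x ∉ Ω ∧ Metric.infDist x (frontier Ω) ≤ ε},
      |u x| ≤ sSup ((fun y => |F y|) '' {x | x ∉ Ω ∧ Metric.infDist x (frontier Ω) ≤ ε}) :=
  dpp_max_principle_general n hn p hp Ω hΩbdd ε hε F u hFbdd humeas hubdd hudpp hbdry
end
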